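/- arXiv:nlin/0212044 — 7 statements merged into one kernel-verified Lean document; each statement's English description precedes it below -/
import Mathlib

section
/- Let V ⊆ ℝ² be open and let f₁₁,f₁₂,f₂₁,f₂₂,f₃₁,f₃₂ : V → ℝ be smooth functions satisfying the structure equations of a pseudo-spherical surface. Define the matrix-valued functions X = (1/2)·[[f₂₁, f₁₁ − f₃₁],[f₁₁ + f₃₁, −f₂₁]] and T = (1/2)·[[f₂₂, f₁₂ − f₃₂],[f₁₂ + f₃₂, −f₂₂]] from V to the 2×2 real matrices. Then the zero-curvature equation ∂ₜX − ∂ₓT + (X·T − T·X) = 0 holds identically on V. -/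
open Real

/-- Partial derivative with respect to the first coordinate `x` of `ℝ × ℝ`. -/
noncomputable def pdx (f : ℝ × ℝ → ℝ) (p : ℝ × ℝ) : ℝ := fderiv ℝ f p (1, 0)

/-- Partial derivative with respect to the second coordinate `t` of `ℝ × ℝ`. -/
noncomputable def pdt (f : ℝ × ℝ → ℝ) (p : ℝ × ℝ) : ℝ := fderiv ℝ f p (0, 1)

/-- The coefficients `f_{αβ}` of the one-forms `ω^α = f_{α1} dx + f_{α2} dt` satisfy the
structure equations of a pseudo-spherical surface on `V`:
`dω¹ = ω³ ∧ ω², dω² = ω¹ ∧ ω³, dω³ = ω¹ ∧ ω²`. -/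
def StructEq (V : Set (ℝ × ℝ)) (f11 f12 f21 f22 f31 f32 : ℝ × ℝ → ℝ) : Prop :=
  ∀ p ∈ V,
    pdx f12 p - pdt f11 p = f31 p * f22 p - f32 p * f21 p ∧
    pdx f22 p - pdt f21 p = f11 p * f32 p - f12 p * f31 p ∧
    pdx f32 p - pdt f31 p = f11 p * f22 p - f12 p * f21 p

lemma pdt_comb (f g : ℝ × ℝ → ℝ) (a b : ℝ) (p : ℝ × ℝ)
    (hf : DifferentiableAt ℝ f p) (hg : DifferentiableAt ℝ g p) :
    pdt (fun q => a * f q + b * g q) p = a * pdt f p + b * pdt g p := by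
  simp only [pdt]
  rw [fderiv_fun_add ((hf.const_mul a)) ((hg.const_mul b)), fderiv_const_mul hf,
    fderiv_const_mul hg]
  simp

lemma pdx_comb (f g : ℝ × ℝ → ℝ) (a b : ℝ) (p : ℝ × ℝ)
    (hf : DifferentiableAt ℝ f p) (hg : DifferentiableAt ℝ g p) :
    pdx (fun q => a * f q + b * g q) p = a * pdx f p + b * pdx g p := by
  simp only [pdx]
  rw [fderiv_fun_add ((hf.const_mul a)) ((hg.const_mul b)), fderiv_const_mul hf,
    fderiv_const_mul hg]
  simp

/-- the structure equations imply the zero-curvature equation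
`∂ₜX − ∂ₓT + [X, T] = 0` for the associated `sl(2,ℝ)`-valued linear problem. -/
theorem zero_curvature_of_structure_equations
    (V : Set (ℝ × ℝ)) (hV : IsOpen V)
    (f11 f12 f21 f22 f31 f32 : ℝ × ℝ → ℝ)
    (hf11 : ContDiffOn ℝ (⊤ : ℕ∞) f11 V) (hf12 : ContDiffOn ℝ (⊤ : ℕ∞) f12 V)
    (hf21 : ContDiffOn ℝ (⊤ : ℕ∞) f21 V) (hf22 : ContDiffOn ℝ (⊤ : ℕ∞) f22 V)
    (hf31 : ContDiffOn ℝ (⊤ : ℕ∞) f31 V) (hf32 : ContDiffOn ℝ (⊤ : ℕ∞) f32 V)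
    (hstruct : StructEq V f11 f12 f21 f22 f31 f32)
    (X T : ℝ × ℝ → Matrix (Fin 2) (Fin 2) ℝ)
    (hX : ∀ p, X p = (1 / 2 : ℝ) •
      !![f21 p, f11 p - f31 p; f11 p + f31 p, -(f21 p)])
    (hT : ∀ p, T p = (1 / 2 : ℝ) •
      !![f22 p, f12 p - f32 p; f12 p + f32 p, -(f22 p)]) :
    ∀ p ∈ V, ∀ i j : Fin 2,
      pdt (fun q => X q i j) p - pdx (fun q => T q i j) p
        + (X p * T p - T p * X p) i j = 0 := by
  intro p hp i j
  have hn := hV.mem_nhds hp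
  have d11 : DifferentiableAt ℝ f11 p := (hf11.contDiffAt hn).differentiableAt (by simp)
  have d12 : DifferentiableAt ℝ f12 p := (hf12.contDiffAt hn).differentiableAt (by simp)
  have d21 : DifferentiableAt ℝ f21 p := (hf21.contDiffAt hn).differentiableAt (by simp)
  have d22 : DifferentiableAt ℝ f22 p := (hf22.contDiffAt hn).differentiableAt (by simp)
  have d31 : DifferentiableAt ℝ f31 p := (hf31.contDiffAt hn).differentiableAt (by simp)
  have d32 : DifferentiableAt ℝ f32 p := (hf32.contDiffAt hn).differentiableAt (by simp)
  obtain ⟨h1, h2, h3⟩ := hstruct p hp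
  have eX : ∀ q, X q 0 0 = (1/2 : ℝ) * f21 q + 0 * f21 q ∧
      X q 0 1 = (1/2 : ℝ) * f11 q + (-(1/2) : ℝ) * f31 q ∧
      X q 1 0 = (1/2 : ℝ) * f11 q + (1/2 : ℝ) * f31 q ∧
      X q 1 1 = (-(1/2) : ℝ) * f21 q + 0 * f21 q := by
    intro q; simp [hX q, Matrix.smul_apply]; ring_nf; tauto
  have eT : ∀ q, T q 0 0 = (1/2 : ℝ) * f22 q + 0 * f22 q ∧
      T q 0 1 = (1/2 : ℝ) * f12 q + (-(1/2) : ℝ) * f32 q ∧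
      T q 1 0 = (1/2 : ℝ) * f12 q + (1/2 : ℝ) * f32 q ∧
      T q 1 1 = (-(1/2) : ℝ) * f22 q + 0 * f22 q := by
    intro q; simp [hT q, Matrix.smul_apply]; ring_nf; tauto
  have hmul : ∀ i j : Fin 2, (X p * T p - T p * X p) i j =
      X p i 0 * T p 0 j + X p i 1 * T p 1 j - (T p i 0 * X p 0 j + T p i 1 * X p 1 j) := by
    intro i j
    simp [Matrix.sub_apply, Matrix.mul_apply, Fin.sum_univ_two]
  fin_cases i <;> fin_cases j <;> simp only [Fin.zero_eta, Fin.mk_one, Fin.isValue]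
  · have e1 : (fun q => X q 0 0) = fun q => (1/2 : ℝ) * f21 q + 0 * f21 q :=
      funext fun q => (eX q).1
    have e2 : (fun q => T q 0 0) = fun q => (1/2 : ℝ) * f22 q + 0 * f22 q :=
      funext fun q => (eT q).1
    rw [e1, e2, pdt_comb _ _ _ _ _ d21 d21, pdx_comb _ _ _ _ _ d22 d22, hmul]
    simp only [(eX p).1, (eX p).2.1, (eX p).2.2.1, (eX p).2.2.2,
      (eT p).1, (eT p).2.1, (eT p).2.2.1, (eT p).2.2.2]
    linear_combination (-1/2 : ℝ) * h2
  · have e1 : (fun q => X q 0 1) = fun q => (1/2 : ℝ) * f11 q + (-(1/2) : ℝ) * f31 q :=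
      funext fun q => (eX q).2.1
    have e2 : (fun q => T q 0 1) = fun q => (1/2 : ℝ) * f12 q + (-(1/2) : ℝ) * f32 q :=
      funext fun q => (eT q).2.1
    rw [e1, e2, pdt_comb _ _ _ _ _ d11 d31, pdx_comb _ _ _ _ _ d12 d32, hmul]
    simp only [(eX p).1, (eX p).2.1, (eX p).2.2.1, (eX p).2.2.2,
      (eT p).1, (eT p).2.1, (eT p).2.2.1, (eT p).2.2.2]
    linear_combination (-1/2 : ℝ) * h1 + (1/2 : ℝ) * h3
  · have e1 : (fun q => X q 1 0) = fun q => (1/2 : ℝ) * f11 q + (1/2 : ℝ) * f31 q :=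
      funext fun q => (eX q).2.2.1
    have e2 : (fun q => T q 1 0) = fun q => (1/2 : ℝ) * f12 q + (1/2 : ℝ) * f32 q :=
      funext fun q => (eT q).2.2.1
    rw [e1, e2, pdt_comb _ _ _ _ _ d11 d31, pdx_comb _ _ _ _ _ d12 d32, hmul]
    simp only [(eX p).1, (eX p).2.1, (eX p).2.2.1, (eX p).2.2.2,
      (eT p).1, (eT p).2.1, (eT p).2.2.1, (eT p).2.2.2]
    linear_combination (-1/2 : ℝ) * h1 + (-1/2 : ℝ) * h3
  · have e1 : (fun q => X q 1 1) = fun q => (-(1/2) : ℝ) * f21 q + 0 * f21 q :=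
      funext fun q => (eX q).2.2.2
    have e2 : (fun q => T q 1 1) = fun q => (-(1/2) : ℝ) * f22 q + 0 * f22 q :=
      funext fun q => (eT q).2.2.2
    rw [e1, e2, pdt_comb _ _ _ _ _ d21 d21, pdx_comb _ _ _ _ _ d22 d22, hmul]
    simp only [(eX p).1, (eX p).2.1, (eX p).2.2.1, (eX p).2.2.2,
      (eT p).1, (eT p).2.1, (eT p).2.2.1, (eT p).2.2.2]
    linear_combination (1/2 : ℝ) * h2
end

section
/- Let V ⊆ ℝ² be open, let f₁₁,f₁₂,f₂₁,f₂₂,f₃₁,f₃₂ : V → ℝ be smooth functions satisfying the structure equations of a pseudo-spherical surface, and let ρ : V → ℝ be smooth. Define the boosted coefficients g₁₁ = f₁₁ cosh ρ − f₃₁ sinh ρ, g₁₂ = f₁₂ cosh ρ − f₃₂ sinh ρ, g₂₁ = f₂₁ + ∂ₓρ, g₂₂ = f₂₂ + ∂ₜρ, g₃₁ = −f₁₁ sinh ρ + f₃₁ cosh ρ, g₃₂ = −f₁₂ sinh ρ + f₃₂ cosh ρ (the coordinate expression of ω̂¹ = ω¹cosh ρ − ω³sinh ρ, ω̂² = ω²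 + dρ, ω̂³ = −ω¹sinh ρ + ω³cosh ρ). Then g₁₁,g₁₂,g₂₁,g₂₂,g₃₁,g₃₂ also satisfy the structure equations of a pseudo-spherical surface on V. -/
open Real

/-- Derivative of a "boosted" combination `f cosh ρ − g sinh ρ` in direction `v`. -/
lemma pd_boost {f g ρ : ℝ × ℝ → ℝ} {p : ℝ × ℝ} (hf : DifferentiableAt ℝ f p)
    (hg : DifferentiableAt ℝ g p) (hρ : DifferentiableAt ℝ ρ p) (v : ℝ × ℝ) :
    fderiv ℝ (fun q => f q * Real.cosh (ρ q) - g q * Real.sinh (ρ q)) p v =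
      (fderiv ℝ f p v * Real.cosh (ρ p) + f p * Real.sinh (ρ p) * fderiv ℝ ρ p v)
      - (fderiv ℝ g p v * Real.sinh (ρ p) + g p * Real.cosh (ρ p) * fderiv ℝ ρ p v) := by
  have hc : HasFDerivAt (fun q => Real.cosh (ρ q)) (Real.sinh (ρ p) • fderiv ℝ ρ p) p :=
    (Real.hasDerivAt_cosh (ρ p)).comp_hasFDerivAt p hρ.hasFDerivAt
  have hs : HasFDerivAt (fun q => Real.sinh (ρ q)) (Real.cosh (ρ p) • fderiv ℝ ρ p) p :=
    (Real.hasDerivAt_sinh (ρ p)).comp_hasFDerivAt p hρ.hasFDerivAt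
  rw [fderiv_fun_sub (hf.fun_mul hc.differentiableAt) (hg.fun_mul hs.differentiableAt),
    fderiv_fun_mul hf hc.differentiableAt, fderiv_fun_mul hg hs.differentiableAt, hc.fderiv, hs.fderiv]
  simp only [ContinuousLinearMap.sub_apply, ContinuousLinearMap.add_apply,
    ContinuousLinearMap.smul_apply, smul_eq_mul]
  ring

/-- Derivative of `f + (∂_w ρ)` in direction `v`. -/
lemma pd_add_deriv {f ρ : ℝ × ℝ → ℝ} {p : ℝ × ℝ} (hf : DifferentiableAt ℝ f p)
    (hF : DifferentiableAt ℝ (fderiv ℝ ρ) p) (v w : ℝ × ℝ) :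
    fderiv ℝ (fun q => f q + fderiv ℝ ρ q w) p v =
      fderiv ℝ f p v + fderiv ℝ (fderiv ℝ ρ) p v w := by
  have h2 : DifferentiableAt ℝ (fun q => fderiv ℝ ρ q w) p :=
    hF.clm_apply (differentiableAt_const w)
  rw [fderiv_fun_add hf h2]
  simp only [ContinuousLinearMap.add_apply]
  congr 1
  rw [fderiv_clm_apply hF (differentiableAt_const w)]
  simp

/-- invariance of the structure equations under the Lorentz boost:
`ω̂¹ = ω¹ cosh ρ − ω³ sinh ρ, ω̂² = ω² + dρ, ω̂³ = −ω¹ sinh ρ + ω³ cosh ρ`. -/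
theorem structure_equations_boost_invariance_II
    (V : Set (ℝ × ℝ)) (hV : IsOpen V)
    (f11 f12 f21 f22 f31 f32 : ℝ × ℝ → ℝ)
    (hf11 : ContDiffOn ℝ (⊤ : ℕ∞) f11 V) (hf12 : ContDiffOn ℝ (⊤ : ℕ∞) f12 V)
    (hf21 : ContDiffOn ℝ (⊤ : ℕ∞) f21 V) (hf22 : ContDiffOn ℝ (⊤ : ℕ∞) f22 V)
    (hf31 : ContDiffOn ℝ (⊤ : ℕ∞) f31 V) (hf32 : ContDiffOn ℝ (⊤ : ℕ∞) f32 V)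
    (hstruct : StructEq V f11 f12 f21 f22 f31 f32)
    (ρ : ℝ × ℝ → ℝ) (hρ : ContDiffOn ℝ (⊤ : ℕ∞) ρ V) :
    StructEq V
      (fun p => f11 p * Real.cosh (ρ p) - f31 p * Real.sinh (ρ p))
      (fun p => f12 p * Real.cosh (ρ p) - f32 p * Real.sinh (ρ p))
      (fun p => f21 p + pdx ρ p)
      (fun p => f22 p + pdt ρ p)
      (fun p => -f11 p * Real.sinh (ρ p) + f31 p * Real.cosh (ρ p))
      (fun p => -f12 p * Real.sinh (ρ p) + f32 p * Real.cosh (ρ p)) := by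
  intro p hp
  have hmem : V ∈ nhds p := hV.mem_nhds hp
  have h11 : DifferentiableAt ℝ f11 p := (hf11.contDiffAt hmem).differentiableAt (by simp)
  have h12 : DifferentiableAt ℝ f12 p := (hf12.contDiffAt hmem).differentiableAt (by simp)
  have h21 : DifferentiableAt ℝ f21 p := (hf21.contDiffAt hmem).differentiableAt (by simp)
  have h22 : DifferentiableAt ℝ f22 p := (hf22.contDiffAt hmem).differentiableAt (by simp)
  have h31 : DifferentiableAt ℝ f31 p := (hf31.contDiffAt hmem).differentiableAt (by simp)
  have h32 : DifferentiableAt ℝ f32 p := (hf32.contDiffAt hmem).differentiableAt (by simp)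
  have hρp := hρ.contDiffAt hmem
  have hρd : DifferentiableAt ℝ ρ p := hρp.differentiableAt (by simp)
  have hF : DifferentiableAt ℝ (fderiv ℝ ρ) p :=
    (hρp.fderiv_right (m := 1) (WithTop.coe_le_coe.mpr le_top)).differentiableAt one_ne_zero
  have hsymm : fderiv ℝ (fderiv ℝ ρ) p (1, 0) (0, 1) =
      fderiv ℝ (fderiv ℝ ρ) p (0, 1) (1, 0) :=
    (hρp.isSymmSndFDerivAt (by rw [minSmoothness_of_isRCLikeNormedField]; exact WithTop.coe_le_coe.mpr (le_top : (2:ℕ∞) ≤ ⊤))) (1, 0) (0, 1)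
  obtain ⟨h1, h2, h3⟩ := hstruct p hp
  have hcs : Real.cosh (ρ p) ^ 2 - Real.sinh (ρ p) ^ 2 = 1 := Real.cosh_sq_sub_sinh_sq (ρ p)
  simp only [pdx, pdt] at h1 h2 h3 ⊢
  have e1 : (fun q => -f11 q * Real.sinh (ρ q) + f31 q * Real.cosh (ρ q)) =
      fun q => f31 q * Real.cosh (ρ q) - f11 q * Real.sinh (ρ q) := by funext q; ring
  have e2 : (fun q => -f12 q * Real.sinh (ρ q) + f32 q * Real.cosh (ρ q)) =
      fun q => f32 q * Real.cosh (ρ q) - f12 q * Real.sinh (ρ q) := by funext q; ring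
  rw [e1, e2]
  refine ⟨?_, ?_, ?_⟩
  · rw [pd_boost h12 h32 hρd, pd_boost h11 h31 hρd]
    linear_combination Real.cosh (ρ p) * h1 - Real.sinh (ρ p) * h3
  · rw [pd_add_deriv h22 hF (1, 0) (0, 1), pd_add_deriv h21 hF (0, 1) (1, 0), hsymm]
    linear_combination h2 - (f11 p * f32 p - f12 p * f31 p) * hcs
  · rw [pd_boost h32 h12 hρd, pd_boost h31 h11 hρd]
    linear_combination Real.cosh (ρ p) * h3 - Real.sinh (ρ p) * h1
end

section
/- Let V ⊆ ℝ² be open, let f₁₁,f₁₂,f₂₁,f₂₂,f₃₁,f₃₂ : V → ℝ be smooth functions satisfying the structure equations of a pseudo-spherical surface, and let ρ : V → ℝ be smooth. Define the boosted coefficients g₁₁ = f₁₁ + ∂ₓρ, g₁₂ = f₁₂ + ∂ₜρ, g₂₁ = f₂₁ cosh ρ + f₃₁ sinh ρ, g₂₂ = f₂₂ cosh ρ + f₃₂ sinh ρ, g₃₁ = f₂₁ sinh ρ + f₃₁ cosh ρ, g₃₂ = f₂₂ sinh ρ + f₃₂ cosh ρ (the coordinate expression of ω̂¹ = ω¹ +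 dρ, ω̂² = ω²cosh ρ + ω³sinh ρ, ω̂³ = ω²sinh ρ + ω³cosh ρ). Then g₁₁,g₁₂,g₂₁,g₂₂,g₃₁,g₃₂ also satisfy the structure equations of a pseudo-spherical surface on V. -/
open Real

/-- Evaluation form of `fderiv_add`. -/
lemma pd_add {f g : ℝ × ℝ → ℝ} {p v : ℝ × ℝ}
    (hf : DifferentiableAt ℝ f p) (hg : DifferentiableAt ℝ g p) :
    fderiv ℝ (fun q => f q + g q) p v = fderiv ℝ f p v + fderiv ℝ g p v := by
  rw [fderiv_fun_add hf hg]; simp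

/-- Evaluation form of `fderiv_mul`. -/
lemma pd_mul {f g : ℝ × ℝ → ℝ} {p v : ℝ × ℝ}
    (hf : DifferentiableAt ℝ f p) (hg : DifferentiableAt ℝ g p) :
    fderiv ℝ (fun q => f q * g q) p v = fderiv ℝ f p v * g p + f p * fderiv ℝ g p v := by
  rw [fderiv_fun_mul hf hg]; simp; ring

lemma pd_cosh {ρ : ℝ × ℝ → ℝ} {p v : ℝ × ℝ} (hρ : DifferentiableAt ℝ ρ p) :
    fderiv ℝ (fun q => Real.cosh (ρ q)) p v = Real.sinh (ρ p) * fderiv ℝ ρ p v := by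
  rw [hρ.hasFDerivAt.cosh.fderiv]; simp

lemma pd_sinh {ρ : ℝ × ℝ → ℝ} {p v : ℝ × ℝ} (hρ' : DifferentiableAt ℝ ρ p) :
    fderiv ℝ (fun q => Real.sinh (ρ q)) p v = Real.cosh (ρ p) * fderiv ℝ ρ p v := by
  rw [hρ'.hasFDerivAt.sinh.fderiv]; simp

/-- Derivative of an evaluated `fderiv`. -/
lemma pd_fderiv_apply {ρ : ℝ × ℝ → ℝ} {p : ℝ × ℝ} (v w : ℝ × ℝ)
    (h : DifferentiableAt ℝ (fderiv ℝ ρ) p) :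
    fderiv ℝ (fun q => fderiv ℝ ρ q v) p w = fderiv ℝ (fderiv ℝ ρ) p w v := by
  have h2 := h.hasFDerivAt.clm_apply (hasFDerivAt_const v p)
  rw [h2.fderiv]
  simp

/-- invariance of the structure equations under the Lorentz boost:
`ω̂¹ = ω¹ + dρ, ω̂² = ω² cosh ρ + ω³ sinh ρ, ω̂³ = ω² sinh ρ + ω³ cosh ρ`. -/
theorem structure_equations_boost_invariance_III
    (V : Set (ℝ × ℝ)) (hV : IsOpen V)
    (f11 f12 f21 f22 f31 f32 : ℝ × ℝ → ℝ)
    (hf11 : ContDiffOn ℝ (⊤ : ℕ∞) f11 V) (hf12 : ContDiffOn ℝ (⊤ : ℕ∞) f12 V)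
    (hf21 : ContDiffOn ℝ (⊤ : ℕ∞) f21 V) (hf22 : ContDiffOn ℝ (⊤ : ℕ∞) f22 V)
    (hf31 : ContDiffOn ℝ (⊤ : ℕ∞) f31 V) (hf32 : ContDiffOn ℝ (⊤ : ℕ∞) f32 V)
    (hstruct : StructEq V f11 f12 f21 f22 f31 f32)
    (ρ : ℝ × ℝ → ℝ) (hρ : ContDiffOn ℝ (⊤ : ℕ∞) ρ V) :
    StructEq V
      (fun p => f11 p + pdx ρ p)
      (fun p => f12 p + pdt ρ p)
      (fun p => f21 p * Real.cosh (ρ p) + f31 p * Real.sinh (ρ p))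
      (fun p => f22 p * Real.cosh (ρ p) + f32 p * Real.sinh (ρ p))
      (fun p => f21 p * Real.sinh (ρ p) + f31 p * Real.cosh (ρ p))
      (fun p => f22 p * Real.sinh (ρ p) + f32 p * Real.cosh (ρ p)) := by
  intro p hp
  have hpV := hV.mem_nhds hp
  -- differentiability at p
  have d11 := ((hf11.contDiffAt hpV).differentiableAt (by simp))
  have d12 := ((hf12.contDiffAt hpV).differentiableAt (by simp))
  have d21 := ((hf21.contDiffAt hpV).differentiableAt (by simp))
  have d22 := ((hf22.contDiffAt hpV).differentiableAt (by simp))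
  have d31 := ((hf31.contDiffAt hpV).differentiableAt (by simp))
  have d32 := ((hf32.contDiffAt hpV).differentiableAt (by simp))
  have dρ := ((hρ.contDiffAt hpV).differentiableAt (by simp))
  have dC : DifferentiableAt ℝ (fun q => Real.cosh (ρ q)) p :=
    dρ.hasFDerivAt.cosh.differentiableAt
  have dS : DifferentiableAt ℝ (fun q => Real.sinh (ρ q)) p :=
    dρ.hasFDerivAt.sinh.differentiableAt
  -- fderiv ρ is differentiable at p
  have dρ' : DifferentiableAt ℝ (fderiv ℝ ρ) p :=
    ((hρ.contDiffAt hpV).fderiv_right (m := 1) ((WithTop.coe_le_coe.mpr le_top))).differentiableAt (by simp)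
  have dρx : DifferentiableAt ℝ (fun q => fderiv ℝ ρ q (1, 0)) p :=
    dρ'.clm_apply (differentiableAt_const _)
  have dρt : DifferentiableAt ℝ (fun q => fderiv ℝ ρ q (0, 1)) p :=
    dρ'.clm_apply (differentiableAt_const _)
  -- symmetry of second derivative
  have hsymm : fderiv ℝ (fderiv ℝ ρ) p (1, 0) (0, 1)
      = fderiv ℝ (fderiv ℝ ρ) p (0, 1) (1, 0) :=
    (hρ.contDiffAt hpV).isSymmSndFDerivAt (by simpa using WithTop.coe_le_coe.mpr (le_top : (2 : ℕ∞) ≤ ⊤)) _ _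
  obtain ⟨h1, h2, h3⟩ := hstruct p hp
  have hcs : Real.cosh (ρ p) ^ 2 - Real.sinh (ρ p) ^ 2 = 1 :=
    Real.cosh_sq_sub_sinh_sq (ρ p)
  simp only [pdx, pdt] at h1 h2 h3 ⊢
  rw [pd_add (d12) dρt, pd_add (d11) dρx,
    pd_fderiv_apply _ _ dρ', pd_fderiv_apply _ _ dρ',
    pd_add (d22.fun_mul dC) (d32.fun_mul dS), pd_add (d21.fun_mul dC) (d31.fun_mul dS),
    pd_add (d22.fun_mul dS) (d32.fun_mul dC), pd_add (d21.fun_mul dS) (d31.fun_mul dC),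
    pd_mul d22 dC, pd_mul d32 dS, pd_mul d21 dC, pd_mul d31 dS,
    pd_mul d22 dS, pd_mul d32 dC, pd_mul d21 dS, pd_mul d31 dC,
    pd_cosh dρ, pd_cosh dρ, pd_sinh dρ, pd_sinh dρ]
  refine ⟨?_, ?_, ?_⟩
  · rw [hsymm]
    linear_combination h1 - (f31 p * f22 p - f32 p * f21 p) * hcs
  · linear_combination Real.cosh (ρ p) * h2 + Real.sinh (ρ p) * h3
  · linear_combination Real.sinh (ρ p) * h2 + Real.cosh (ρ p) * h3
end

section
/- Let μ₀, θ₀, α₀, β₀ be real numbers, let g : ℝ → ℝ be smooth with g'' + μ₀·g = θ₀, let η ≠ 0 and ζ be real numbers with ζ² = α₀η² − μ₀, and let V ⊆ ℝ² be open. Let u : V → ℝ be a smooth solution of Rabelo's equation ∂ₓ(∂ₜu − (α₀·g(u) + β₀)·∂ₓu) = g'(u). Then the functions f₁₁ = ζ·∂ₓu, f₁₂ = ζ·(α₀·g(u) + β₀)·∂ₓu, f₂₁ = η, f₂₂ = (ζ²·g(u) + θ₀)/η + β₀·η, f₃₁ = 0, f₃₂ = ζ·g'(u)/η satisfy the structure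 equations of a pseudo-spherical surface on V. -/
open Real

section Aux

lemma aux_contDiffAt_eval (f : ℝ × ℝ → ℝ) (p : ℝ × ℝ) (hf : ∀ᶠ q in nhds p, ContDiffAt ℝ (⊤ : ℕ∞) f q)
    (v : ℝ × ℝ) : ContDiffAt ℝ (⊤ : ℕ∞) (fun q => fderiv ℝ f q v) p := by
  have hF : ContDiffAt ℝ (⊤ : ℕ∞) (fderiv ℝ f) p := by
    have hp : ContDiffAt ℝ (⊤ : ℕ∞) f p := hf.self_of_nhds
    exact hp.fderiv_right (by exact_mod_cast le_top)
  exact (ContinuousLinearMap.apply ℝ ℝ v).contDiff.contDiffAt.comp p hF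

lemma aux_diff_eval (f : ℝ × ℝ → ℝ) (p : ℝ × ℝ) (hf : ContDiffAt ℝ (⊤ : ℕ∞) f p) (v : ℝ × ℝ) :
    DifferentiableAt ℝ (fun q => fderiv ℝ f q v) p := by
  have hF : ContDiffAt ℝ (⊤ : ℕ∞) (fderiv ℝ f) p := hf.fderiv_right (by exact_mod_cast le_top)
  exact (ContinuousLinearMap.apply ℝ ℝ v).differentiableAt.comp p
    (hF.differentiableAt (by simp))

lemma aux_fderiv_eval (f : ℝ × ℝ → ℝ) (p : ℝ × ℝ) (hf : ContDiffAt ℝ (⊤ : ℕ∞) f p) (v w : ℝ × ℝ) :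
    fderiv ℝ (fun q => fderiv ℝ f q v) p w = fderiv ℝ (fderiv ℝ f) p w v := by
  have hF : ContDiffAt ℝ (⊤ : ℕ∞) (fderiv ℝ f) p := hf.fderiv_right (by exact_mod_cast le_top)
  have heq : (fun q => fderiv ℝ f q v) = (ContinuousLinearMap.apply ℝ ℝ v) ∘ (fderiv ℝ f) := rfl
  rw [heq, fderiv_comp p (ContinuousLinearMap.apply ℝ ℝ v).differentiableAt
    (hF.differentiableAt (by simp)), ContinuousLinearMap.fderiv]
  rfl

lemma aux_symm (f : ℝ × ℝ → ℝ) (p : ℝ × ℝ) (hf : ContDiffAt ℝ (⊤ : ℕ∞) f p) (v w : ℝ × ℝ) :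
    fderiv ℝ (fun q => fderiv ℝ f q v) p w = fderiv ℝ (fun q => fderiv ℝ f q w) p v := by
  rw [aux_fderiv_eval f p hf v w, aux_fderiv_eval f p hf w v]
  have hf2 : ContDiffAt ℝ ((2:ℕ∞) : WithTop ℕ∞) f p := hf.of_le (by exact_mod_cast le_top)
  exact (hf2.isSymmSndFDerivAt (by simp)).eq w v

lemma aux_chain (h : ℝ → ℝ) (hh : ContDiff ℝ (⊤ : ℕ∞) h) (u : ℝ × ℝ → ℝ) (p : ℝ × ℝ)
    (hu : DifferentiableAt ℝ u p) (v : ℝ × ℝ) :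
    fderiv ℝ (fun q => h (u q)) p v = deriv h (u p) * fderiv ℝ u p v := by
  have hhd : DifferentiableAt ℝ h (u p) := (hh.differentiable (by simp)) (u p)
  have heq : (fun q => h (u q)) = h ∘ u := rfl
  rw [heq, fderiv_comp p hhd hu]
  simp only [ContinuousLinearMap.coe_comp', Function.comp_apply]
  have h2 : fderiv ℝ h (u p) (fderiv ℝ u p v) = (fderiv ℝ u p v) • fderiv ℝ h (u p) 1 := by
    rw [← ContinuousLinearMap.map_smul, smul_eq_mul, mul_one]
  rw [h2, fderiv_apply_one_eq_deriv, smul_eq_mul]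
  ring

end Aux

/-- Rabelo's equation `(u_t − (α₀ g(u) + β₀) u_x)_x = g'(u)`, with
`g'' + μ₀ g = θ₀` and `ζ² = α₀ η² − μ₀`, describes pseudo-spherical surfaces. -/
theorem rabelo_describes_pss
    (μ₀ θ₀ α₀ β₀ : ℝ)
    (g : ℝ → ℝ) (hg : ContDiff ℝ (⊤ : ℕ∞) g)
    (hgeq : ∀ s : ℝ, deriv (deriv g) s + μ₀ * g s = θ₀)
    (η ζ : ℝ) (hη : η ≠ 0) (hζ : ζ ^ 2 = α₀ * η ^ 2 - μ₀)
    (V : Set (ℝ × ℝ)) (hV : IsOpen V)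
    (u : ℝ × ℝ → ℝ) (hu : ContDiffOn ℝ (⊤ : ℕ∞) u V)
    (hrabelo : ∀ p ∈ V,
      pdx (fun q => pdt u q - (α₀ * g (u q) + β₀) * pdx u q) p = deriv g (u p)) :
    StructEq V
      (fun p => ζ * pdx u p)
      (fun p => ζ * (α₀ * g (u p) + β₀) * pdx u p)
      (fun _ => η)
      (fun p => (ζ ^ 2 * g (u p) + θ₀) / η + β₀ * η)
      (fun _ => 0)
      (fun p => ζ * deriv g (u p) / η) := by
  -- downgrade smoothness to ∞ (as ℕ∞)
  have hg1 : ContDiff ℝ (⊤ : ℕ∞) g := hg.of_le (by simp)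
  have hg2 : ContDiff ℝ (⊤ : ℕ∞) (deriv g) := by
    rw [contDiff_infty_iff_deriv] at hg1
    exact hg1.2
  have hg3 : ContDiff ℝ (⊤ : ℕ∞) (deriv (deriv g)) := by
    rw [contDiff_infty_iff_deriv] at hg2
    exact hg2.2
  intro p hp
  have hVp : V ∈ nhds p := hV.mem_nhds hp
  have hup : ∀ᶠ q in nhds p, ContDiffAt ℝ (⊤ : ℕ∞) u q := by
    filter_upwards [hV.eventually_mem hp] with q hq
    exact (hu.of_le (by simp)).contDiffAt (hV.mem_nhds hq)
  have hupp : ContDiffAt ℝ (⊤ : ℕ∞) u p := hup.self_of_nhds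
  have hud : DifferentiableAt ℝ u p := hupp.differentiableAt (by simp)
  -- basic differentiable pieces
  have hpdxu : ContDiffAt ℝ (⊤ : ℕ∞) (fun q => fderiv ℝ u q (1,0)) p :=
    aux_contDiffAt_eval u p hup (1,0)
  have hpdtu : ContDiffAt ℝ (⊤ : ℕ∞) (fun q => fderiv ℝ u q (0,1)) p :=
    aux_contDiffAt_eval u p hup (0,1)
  have hgu : ContDiffAt ℝ (⊤ : ℕ∞) (fun q => g (u q)) p := hg1.contDiffAt.comp p hupp
  have hg'u : ContDiffAt ℝ (⊤ : ℕ∞) (fun q => deriv g (u q)) p := hg2.contDiffAt.comp p hupp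
  have hone : ((⊤ : ℕ∞) : WithTop ℕ∞) ≠ 0 := by simp
  -- chain rule facts
  have hchain_g : ∀ v, fderiv ℝ (fun q => g (u q)) p v = deriv g (u p) * fderiv ℝ u p v :=
    fun v => aux_chain g hg1 u p hud v
  have hchain_g' : ∀ v, fderiv ℝ (fun q => deriv g (u q)) p v
      = deriv (deriv g) (u p) * fderiv ℝ u p v :=
    fun v => aux_chain (deriv g) hg2 u p hud v
  -- the product term h := (α₀ g(u) + β₀) * u_x is differentiable at p
  have hA : DifferentiableAt ℝ (fun q => α₀ * g (u q) + β₀) p := by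
    exact ((hgu.differentiableAt hone).const_mul α₀).add_const β₀
  have hB : DifferentiableAt ℝ (fun q => fderiv ℝ u q (1,0)) p :=
    hpdxu.differentiableAt hone
  have hprod : DifferentiableAt ℝ (fun q => (α₀ * g (u q) + β₀) * fderiv ℝ u q (1,0)) p :=
    hA.mul hB
  have hBt : DifferentiableAt ℝ (fun q => fderiv ℝ u q (0,1)) p :=
    hpdtu.differentiableAt hone
  -- notation
  have hgeqp := hgeq (u p)
  refine ⟨?_, ?_, ?_⟩
  · -- first structure equation, uses Rabelo's equation and symmetry of 2nd derivatives
    have hrab := hrabelo p hp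
    -- unfold pdx/pdt in hrab
    simp only [pdx, pdt] at hrab ⊢
    -- split the fderiv of the difference
    have hsplit : fderiv ℝ (fun q => fderiv ℝ u q (0,1)
        - (α₀ * g (u q) + β₀) * fderiv ℝ u q (1,0)) p (1,0)
        = fderiv ℝ (fun q => fderiv ℝ u q (0,1)) p (1,0)
          - fderiv ℝ (fun q => (α₀ * g (u q) + β₀) * fderiv ℝ u q (1,0)) p (1,0) := by
      rw [fderiv_fun_sub hBt hprod]
      simp
    rw [hsplit] at hrab
    -- symmetry of mixed partials
    have hsym := aux_symm u p hupp (0,1) (1,0)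
    -- compute fderiv of ζ * (...) terms
    have h1 : fderiv ℝ (fun q => ζ * (α₀ * g (u q) + β₀) * fderiv ℝ u q (1,0)) p (1,0)
        = ζ * fderiv ℝ (fun q => (α₀ * g (u q) + β₀) * fderiv ℝ u q (1,0)) p (1,0) := by
      have : (fun q => ζ * (α₀ * g (u q) + β₀) * fderiv ℝ u q (1,0))
          = fun q => ζ * ((α₀ * g (u q) + β₀) * fderiv ℝ u q (1,0)) := by
        funext q; ring
      rw [this, fderiv_const_mul hprod]
      simp
    have h2 : fderiv ℝ (fun q => ζ * fderiv ℝ u q (1,0)) p (0,1)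
        = ζ * fderiv ℝ (fun q => fderiv ℝ u q (1,0)) p (0,1) := by
      rw [fderiv_const_mul hB]
      simp
    rw [h1, h2, ← hsym]
    -- now: ζ * (d/dx of product) - ζ * (d/dx of u_t) = 0 * f22 - (ζ g' / η) * η
    have hr2 : ζ * fderiv ℝ (fun q => fderiv ℝ u q (0,1)) p (1,0)
        - ζ * fderiv ℝ (fun q => (α₀ * g (u q) + β₀) * fderiv ℝ u q (1,0)) p (1,0)
        = ζ * deriv g (u p) := by
      rw [← mul_sub, hrab]
    field_simp
    linear_combination (-η) * hr2
  · -- second structure equation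
    simp only [pdx, pdt]
    have hc : fderiv ℝ (fun q => (ζ^2 * g (u q) + θ₀) / η + β₀ * η) p (1,0)
        = ζ^2 / η * (deriv g (u p) * fderiv ℝ u p (1,0)) := by
      have heq : (fun q => (ζ^2 * g (u q) + θ₀) / η + β₀ * η)
          = fun q => (ζ^2 / η) * g (u q) + (θ₀ / η + β₀ * η) := by
        funext q; field_simp; ring
      rw [heq]
      have hgud : DifferentiableAt ℝ (fun q => g (u q)) p := hgu.differentiableAt hone
      rw [fderiv_add_const, fderiv_const_mul hgud]
      simp only [ContinuousLinearMap.coe_smul', Pi.smul_apply, smul_eq_mul]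
      rw [hchain_g (1,0)]
    rw [hc, fderiv_fun_const]
    simp only [Pi.zero_apply, ContinuousLinearMap.zero_apply]
    field_simp
    ring
  · -- third structure equation
    simp only [pdx, pdt]
    have hc : fderiv ℝ (fun q => ζ * deriv g (u q) / η) p (1,0)
        = ζ / η * (deriv (deriv g) (u p) * fderiv ℝ u p (1,0)) := by
      have heq : (fun q => ζ * deriv g (u q) / η) = fun q => (ζ / η) * deriv g (u q) := by
        funext q; ring
      rw [heq, fderiv_const_mul (hg'u.differentiableAt hone)]
      simp only [ContinuousLinearMap.coe_smul', Pi.smul_apply, smul_eq_mul]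
      rw [hchain_g' (1,0)]
    rw [hc, fderiv_fun_const]
    simp only [Pi.zero_apply, ContinuousLinearMap.zero_apply]
    -- use g'' (u p) = θ₀ - μ₀ g(u p) and ζ² = α₀ η² - μ₀
    have hgpp : deriv (deriv g) (u p) = θ₀ - μ₀ * g (u p) := by linarith [hgeq (u p)]
    rw [hgpp]
    field_simp
    linear_combination (-(ζ * fderiv ℝ u p (1,0) * g (u p))) * hζ
end

section
/- Let m ≥ 1, let a₁, …, a_m be real numbers with a₁ = 1, let V ⊆ ℝ² be open with coordinates (x,τ), and let u : V → ℝ be a smooth solution of the linear evolution equation ∂_τ u = Σ_{k=1}^{m} a_k·(∂ₓ^{k+1}u + ∂ₓ^{k}u). Set H = Σ_{k=1}^{m} a_k·∂ₓ^{k}u. Then the functions f₁₁ = u, f₁₂ = H, f₂₁ = 1, f₂₂ = 0, f₃₁ = u, f₃₂ = H satisfy the structure equations of a pseudo-spherical surface on V (here the second independent variable t is renamed τ). In other words, each member of the linear hierarchy û_{τ_i} = Σ a_k(û_{x^{k+1}} + û_{x^k}) describes pseudo-spherical surfaces with ω¹ = ω³ = u dx + H dτ and ω² = dx. -/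
open Real

lemma pdx_smooth {V : Set (ℝ × ℝ)} (hV : IsOpen V) {f : ℝ × ℝ → ℝ}
    (hf : ContDiffOn ℝ (⊤ : ℕ∞) f V) : ContDiffOn ℝ (⊤ : ℕ∞) (pdx f) V := by
  have h : ContDiffOn ℝ (⊤ : ℕ∞) (fun p => fderiv ℝ f p) V := hf.fderiv_of_isOpen hV (by simp)
  exact h.clm_apply contDiffOn_const

lemma pdx_iter_smooth {V : Set (ℝ × ℝ)} (hV : IsOpen V) {f : ℝ × ℝ → ℝ}
    (hf : ContDiffOn ℝ (⊤ : ℕ∞) f V) (k : ℕ) : ContDiffOn ℝ (⊤ : ℕ∞) (pdx^[k] f) V := by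
  induction k with
  | zero => simpa using hf
  | succ k ih => rw [Function.iterate_succ_apply']; exact pdx_smooth hV ih

/-- each member of the linear hierarchy
`u_τ = Σ_{k=1}^m a_k (u_{x^{k+1}} + u_{x^k})` (with `a₁ = 1`) describes pseudo-spherical
surfaces with `ω¹ = ω³ = u dx + H dτ`, `ω² = dx`, where `H = Σ_{k=1}^m a_k u_{x^k}`.
Here the second coordinate of `ℝ × ℝ` plays the role of `τ`. -/
theorem linear_hierarchy_describes_pss
    (m : ℕ) (hm : 1 ≤ m)
    (a : ℕ → ℝ) (ha1 : a 1 = 1)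
    (V : Set (ℝ × ℝ)) (hV : IsOpen V)
    (u : ℝ × ℝ → ℝ) (hu : ContDiffOn ℝ (⊤ : ℕ∞) u V)
    (hlin : ∀ p ∈ V,
      pdt u p = ∑ k ∈ Finset.Icc 1 m, a k * (pdx^[k + 1] u p + pdx^[k] u p)) :
    StructEq V
      u
      (fun p => ∑ k ∈ Finset.Icc 1 m, a k * pdx^[k] u p)
      (fun _ => 1)
      (fun _ => 0)
      u
      (fun p => ∑ k ∈ Finset.Icc 1 m, a k * pdx^[k] u p) := by
  intro p hp
  have hdiff : ∀ k : ℕ, DifferentiableAt ℝ (pdx^[k] u) p := fun k =>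
    ((pdx_iter_smooth hV hu k).differentiableOn (by simp)).differentiableAt
      (hV.mem_nhds hp)
  have hsum : pdx (fun p => ∑ k ∈ Finset.Icc 1 m, a k * pdx^[k] u p) p
      = ∑ k ∈ Finset.Icc 1 m, a k * pdx^[k + 1] u p := by
    have h0 : pdx (fun p => ∑ k ∈ Finset.Icc 1 m, a k * pdx^[k] u p) p
        = (fderiv ℝ (fun p => ∑ k ∈ Finset.Icc 1 m, a k * pdx^[k] u p) p) (1, 0) := rfl
    rw [h0, fderiv_fun_sum (fun k _ => ((hdiff k).const_mul (a k))),
      ContinuousLinearMap.sum_apply]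
    refine Finset.sum_congr rfl fun k _ => ?_
    rw [fderiv_const_mul (hdiff k), ContinuousLinearMap.smul_apply,
      Function.iterate_succ_apply']
    rfl
  refine ⟨?_, ?_, ?_⟩
  · rw [hsum, hlin p hp, ← Finset.sum_sub_distrib]
    simp [mul_add, sub_add_cancel_left, Finset.sum_neg_distrib]
  · simp [pdx, pdt]
    ring
  · rw [hsum, hlin p hp, ← Finset.sum_sub_distrib]
    simp [mul_add, sub_add_cancel_left, Finset.sum_neg_distrib]
end

section
/- Let m ≥ 2, let U ⊆ ℝ^m be open, let Θ¹, Θ², Θ³ : U → ℝ^m be smooth coefficient maps of one-forms satisfying the structure equations of a pseudo-spherical surface in m variables, and let θ : U → ℝ be smooth with ∂_A θ = Θ¹_A·cos θ + Θ²_A·sin θ − Θ³_A for every index A. Then the one-form with components η_A = −Θ¹_A·sin θ + Θ²_A·cos θ is closed, i.e., ∂_A η_B = ∂_B η_A on U for all indices A, B. -/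
open Real

/-- Partial derivative in the `A`-th coordinate direction of `ℝ^m = Fin m → ℝ`. -/
noncomputable def pd {m : ℕ} (A : Fin m) (f : (Fin m → ℝ) → ℝ) (p : Fin m → ℝ) : ℝ :=
  fderiv ℝ f p (Pi.single A 1)

/-- The coefficient maps `Θ¹, Θ², Θ³ : V → ℝ^m` of one-forms `Θ^α = Σ_A Θ^α_A dz_A`
satisfy the structure equations of a pseudo-spherical surface in `m` variables:
`dΘ¹ = Θ³ ∧ Θ², dΘ² = Θ¹ ∧ Θ³, dΘ³ = Θ¹ ∧ Θ²`. -/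
def StructEqM {m : ℕ} (V : Set (Fin m → ℝ)) (Θ1 Θ2 Θ3 : (Fin m → ℝ) → Fin m → ℝ) : Prop :=
  ∀ p ∈ V, ∀ A B : Fin m,
    pd A (fun q => Θ1 q B) p - pd B (fun q => Θ1 q A) p
      = Θ3 p A * Θ2 p B - Θ3 p B * Θ2 p A ∧
    pd A (fun q => Θ2 q B) p - pd B (fun q => Θ2 q A) p
      = Θ1 p A * Θ3 p B - Θ1 p B * Θ3 p A ∧
    pd A (fun q => Θ3 q B) p - pd B (fun q => Θ3 q A) p
      = Θ1 p A * Θ2 p B - Θ1 p B * Θ2 p A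

lemma pd_eq {m : ℕ} {A : Fin m} {f : (Fin m → ℝ) → ℝ} {p : Fin m → ℝ}
    {L : (Fin m → ℝ) →L[ℝ] ℝ} (h : HasFDerivAt f L p) :
    pd A f p = L (Pi.single A 1) := by
  simp [pd, h.fderiv]

lemma pd_formula {m : ℕ} (A : Fin m) (f g θ : (Fin m → ℝ) → ℝ) (p : Fin m → ℝ)
    (hf : DifferentiableAt ℝ f p) (hg : DifferentiableAt ℝ g p)
    (hθ : DifferentiableAt ℝ θ p) :
    pd A (fun q => -f q * Real.sin (θ q) + g q * Real.cos (θ q)) p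
      = -(pd A f p * Real.sin (θ p)) - f p * (Real.cos (θ p) * pd A θ p)
        + (pd A g p * Real.cos (θ p) - g p * (Real.sin (θ p) * pd A θ p)) := by
  have hθ' := hθ.hasFDerivAt
  have hsin : HasFDerivAt (fun q => Real.sin (θ q)) (Real.cos (θ p) • fderiv ℝ θ p) p :=
    (Real.hasDerivAt_sin (θ p)).comp_hasFDerivAt p hθ'
  have hcos : HasFDerivAt (fun q => Real.cos (θ q)) ((-Real.sin (θ p)) • fderiv ℝ θ p) p :=
    (Real.hasDerivAt_cos (θ p)).comp_hasFDerivAt p hθ'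
  have h1 := (hf.hasFDerivAt.neg.mul hsin).add (hg.hasFDerivAt.mul hcos)
  rw [pd_eq (f := fun q => -f q * Real.sin (θ q) + g q * Real.cos (θ q)) h1]
  simp [pd, ContinuousLinearMap.add_apply, ContinuousLinearMap.smul_apply,
    ContinuousLinearMap.neg_apply, smul_eq_mul]
  ring

/-- given a solution `θ` of the Pfaffian system
`dθ = Θ¹ cos θ + Θ² sin θ − Θ³`, the one-form `−Θ¹ sin θ + Θ² cos θ` is closed. -/
theorem closedness_of_rotated_form
    (m : ℕ) (hm : 2 ≤ m)
    (U : Set (Fin m → ℝ)) (hU : IsOpen U)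
    (Θ1 Θ2 Θ3 : (Fin m → ℝ) → Fin m → ℝ)
    (hΘ1 : ContDiffOn ℝ (⊤ : ℕ∞) Θ1 U) (hΘ2 : ContDiffOn ℝ (⊤ : ℕ∞) Θ2 U) (hΘ3 : ContDiffOn ℝ (⊤ : ℕ∞) Θ3 U)
    (hstruct : StructEqM U Θ1 Θ2 Θ3)
    (θ : (Fin m → ℝ) → ℝ) (hθ : ContDiffOn ℝ (⊤ : ℕ∞) θ U)
    (hpfaff : ∀ q ∈ U, ∀ A : Fin m,
      pd A θ q = Θ1 q A * Real.cos (θ q) + Θ2 q A * Real.sin (θ q) - Θ3 q A) :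
    ∀ p ∈ U, ∀ A B : Fin m,
      pd A (fun q => -Θ1 q B * Real.sin (θ q) + Θ2 q B * Real.cos (θ q)) p
        = pd B (fun q => -Θ1 q A * Real.sin (θ q) + Θ2 q A * Real.cos (θ q)) p := by
  intro p hp A B
  have hnhds : U ∈ nhds p := hU.mem_nhds hp
  have dθ : DifferentiableAt ℝ θ p :=
    ((hθ.contDiffAt hnhds).differentiableAt (by simp))
  have dΘ1 : ∀ C : Fin m, DifferentiableAt ℝ (fun q => Θ1 q C) p := fun C =>
    (differentiableAt_pi.1 ((hΘ1.contDiffAt hnhds).differentiableAt (by simp))) C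
  have dΘ2 : ∀ C : Fin m, DifferentiableAt ℝ (fun q => Θ2 q C) p := fun C =>
    (differentiableAt_pi.1 ((hΘ2.contDiffAt hnhds).differentiableAt (by simp))) C
  rw [pd_formula A (fun q => Θ1 q B) (fun q => Θ2 q B) θ p (dΘ1 B) (dΘ2 B) dθ,
      pd_formula B (fun q => Θ1 q A) (fun q => Θ2 q A) θ p (dΘ1 A) (dΘ2 A) dθ,
      hpfaff p hp A, hpfaff p hp B]
  obtain ⟨s1, s2, -⟩ := hstruct p hp A B
  linear_combination (-Real.sin (θ p)) * s1 + Real.cos (θ p) * s2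
end

section
/- Let V ⊆ ℝ² be open and let θ, ω : V → ℝ be smooth functions satisfying the classical Bäcklund system ∂ₜθ + ∂ₓω = −sin ω · cos θ and ∂ₓθ + ∂ₜω = cos ω · sin θ on V. Then both θ and ω satisfy the sine-Gordon equation: ∂ₓₓθ − ∂ₜₜθ = sin θ · cos θ and ∂ₓₓω − ∂ₜₜω = sin ω · cos ω on V. -/
open Real

/-- the classical Bäcklund system
`θ_t + ω_x = −sin ω cos θ`, `θ_x + ω_t = cos ω sin θ`
forces both `θ` and `ω` to satisfy the sine-Gordon equation
`θ_{xx} − θ_{tt} = sin θ cos θ`. -/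
theorem backlund_implies_sine_gordon
    (V : Set (ℝ × ℝ)) (hV : IsOpen V)
    (th om : ℝ × ℝ → ℝ)
    (hth : ContDiffOn ℝ (⊤ : ℕ∞) th V) (hom : ContDiffOn ℝ (⊤ : ℕ∞) om V)
    (hb1 : ∀ p ∈ V, pdt th p + pdx om p = -Real.sin (om p) * Real.cos (th p))
    (hb2 : ∀ p ∈ V, pdx th p + pdt om p = Real.cos (om p) * Real.sin (th p)) :
    (∀ p ∈ V, pdx (pdx th) p - pdt (pdt th) p = Real.sin (th p) * Real.cos (th p)) ∧
    (∀ p ∈ V, pdx (pdx om) p - pdt (pdt om) p = Real.sin (om p) * Real.cos (om p)) := by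
  constructor
  all_goals intro p hp
  all_goals {
    have hmem := hV.mem_nhds hp
    have hthp : ContDiffAt ℝ (⊤ : ℕ∞) th p := hth.contDiffAt hmem
    have homp : ContDiffAt ℝ (⊤ : ℕ∞) om p := hom.contDiffAt hmem
    have hM : HasFDerivAt th (fderiv ℝ th p) p :=
      (hthp.differentiableAt (by simp)).hasFDerivAt
    have hL : HasFDerivAt om (fderiv ℝ om p) p :=
      (homp.differentiableAt (by simp)).hasFDerivAt
    have hBo : HasFDerivAt (fderiv ℝ om) (fderiv ℝ (fderiv ℝ om) p) p :=
      ((homp.fderiv_right (m := (⊤ : ℕ∞)) (by simp)).differentiableAt (by simp)).hasFDerivAt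
    have hBt : HasFDerivAt (fderiv ℝ th) (fderiv ℝ (fderiv ℝ th) p) p :=
      ((hthp.fderiv_right (m := (⊤ : ℕ∞)) (by simp)).differentiableAt (by simp)).hasFDerivAt
    have hso : ∀ v w, fderiv ℝ (fderiv ℝ om) p v w = fderiv ℝ (fderiv ℝ om) p w v :=
      homp.isSymmSndFDerivAt (by rw [minSmoothness_of_isRCLikeNormedField]; exact WithTop.coe_le_coe.mpr le_top)
    have hst : ∀ v w, fderiv ℝ (fderiv ℝ th) p v w = fderiv ℝ (fderiv ℝ th) p w v :=
      hthp.isSymmSndFDerivAt (by rw [minSmoothness_of_isRCLikeNormedField]; exact WithTop.coe_le_coe.mpr le_top)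
    -- derivatives of the evaluated fderivs
    have hpdtom : HasFDerivAt (pdt om)
        ((ContinuousLinearMap.apply ℝ ℝ ((0:ℝ),(1:ℝ))).comp (fderiv ℝ (fderiv ℝ om) p)) p :=
      (ContinuousLinearMap.apply ℝ ℝ ((0:ℝ),(1:ℝ))).hasFDerivAt.comp p hBo
    have hpdxom : HasFDerivAt (pdx om)
        ((ContinuousLinearMap.apply ℝ ℝ ((1:ℝ),(0:ℝ))).comp (fderiv ℝ (fderiv ℝ om) p)) p :=
      (ContinuousLinearMap.apply ℝ ℝ ((1:ℝ),(0:ℝ))).hasFDerivAt.comp p hBo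
    have hpdtth : HasFDerivAt (pdt th)
        ((ContinuousLinearMap.apply ℝ ℝ ((0:ℝ),(1:ℝ))).comp (fderiv ℝ (fderiv ℝ th) p)) p :=
      (ContinuousLinearMap.apply ℝ ℝ ((0:ℝ),(1:ℝ))).hasFDerivAt.comp p hBt
    have hpdxth : HasFDerivAt (pdx th)
        ((ContinuousLinearMap.apply ℝ ℝ ((1:ℝ),(0:ℝ))).comp (fderiv ℝ (fderiv ℝ th) p)) p :=
      (ContinuousLinearMap.apply ℝ ℝ ((1:ℝ),(0:ℝ))).hasFDerivAt.comp p hBt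
    -- derivatives of the nonlinear right-hand sides
    have hcosom : HasFDerivAt (fun q => Real.cos (om q))
        ((-Real.sin (om p)) • fderiv ℝ om p) p :=
      (Real.hasDerivAt_cos (om p)).comp_hasFDerivAt p hL
    have hsinom : HasFDerivAt (fun q => Real.sin (om q))
        ((Real.cos (om p)) • fderiv ℝ om p) p :=
      (Real.hasDerivAt_sin (om p)).comp_hasFDerivAt p hL
    have hcosth : HasFDerivAt (fun q => Real.cos (th q))
        ((-Real.sin (th p)) • fderiv ℝ th p) p :=
      (Real.hasDerivAt_cos (th p)).comp_hasFDerivAt p hM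
    have hsinth : HasFDerivAt (fun q => Real.sin (th q))
        ((Real.cos (th p)) • fderiv ℝ th p) p :=
      (Real.hasDerivAt_sin (th p)).comp_hasFDerivAt p hM
    have hN1 : HasFDerivAt (fun q => Real.cos (om q) * Real.sin (th q))
        (Real.cos (om p) • ((Real.cos (th p)) • fderiv ℝ th p) +
          Real.sin (th p) • ((-Real.sin (om p)) • fderiv ℝ om p)) p :=
      hcosom.mul hsinth
    have hN2 : HasFDerivAt (fun q => -Real.sin (om q) * Real.cos (th q))
        ((-Real.sin (om p)) • ((-Real.sin (th p)) • fderiv ℝ th p) +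
          Real.cos (th p) • (-((Real.cos (om p)) • fderiv ℝ om p))) p :=
      hsinom.neg.mul hcosth
    -- eventual rewriting of first derivatives via the Bäcklund system
    have hE1 : pdx th =ᶠ[nhds p] fun q => Real.cos (om q) * Real.sin (th q) - pdt om q := by
      filter_upwards [hmem] with q hq
      have := hb2 q hq; linarith
    have hE2 : pdt th =ᶠ[nhds p] fun q => -Real.sin (om q) * Real.cos (th q) - pdx om q := by
      filter_upwards [hmem] with q hq
      have := hb1 q hq; linarith
    have hE3 : pdx om =ᶠ[nhds p] fun q => -Real.sin (om q) * Real.cos (th q) - pdt th q := by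
      filter_upwards [hmem] with q hq
      have := hb1 q hq; linarith
    have hE4 : pdt om =ᶠ[nhds p] fun q => Real.cos (om q) * Real.sin (th q) - pdx th q := by
      filter_upwards [hmem] with q hq
      have := hb2 q hq; linarith
    have h1 : fderiv ℝ (pdx th) p = _ := hE1.fderiv_eq.trans (hN1.sub hpdtom).fderiv
    have h2 : fderiv ℝ (pdt th) p = _ := hE2.fderiv_eq.trans (hN2.sub hpdxom).fderiv
    have h3 : fderiv ℝ (pdx om) p = _ := hE3.fderiv_eq.trans (hN2.sub hpdtth).fderiv
    have h4 : fderiv ℝ (pdt om) p = _ := hE4.fderiv_eq.trans (hN1.sub hpdxth).fderiv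
    have hb1' := hb1 p hp
    have hb2' := hb2 p hp
    have hpy1 : Real.sin (om p)^2 + Real.cos (om p)^2 = 1 := Real.sin_sq_add_cos_sq _
    have hpy2 : Real.sin (th p)^2 + Real.cos (th p)^2 = 1 := Real.sin_sq_add_cos_sq _
    simp only [pdx, pdt] at hb1' hb2' ⊢
    simp only [h1, h2, h3, h4] <;>
    simp only [ContinuousLinearMap.sub_apply, ContinuousLinearMap.add_apply,
      ContinuousLinearMap.smul_apply, ContinuousLinearMap.neg_apply,
      ContinuousLinearMap.comp_apply, ContinuousLinearMap.apply_apply, smul_eq_mul] <;>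
    simp only [hso ((1:ℝ),(0:ℝ)) ((0:ℝ),(1:ℝ)), hst ((1:ℝ),(0:ℝ)) ((0:ℝ),(1:ℝ))] <;>
    first
    | linear_combination (Real.cos (om p)*Real.cos (th p))*hb2' -
        (Real.sin (om p)*Real.sin (th p))*hb1' + (Real.sin (th p)*Real.cos (th p))*hpy1
    | linear_combination (Real.sin (om p)*Real.sin (th p))*hb2' -
        (Real.cos (om p)*Real.cos (th p))*hb1' + (Real.sin (om p)*Real.cos (om p))*hpy2
  }
end
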